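/- arXiv:1303.0035 — 6 statements merged into one kernel-verified Lean document; each statement's English description precedes it below -/
import Mathlib

section
/- The map that sends a total valid coloring C of a finite simple graph G to the set of edges of G both of whose endpoints are colored black by C is a bijection between the set of total valid colorings of G and the set of dominating induced matchings of G. -/
variable {V : Type*}

/-- An edge `e` dominates an edge `f` if they share a vertex
(in particular every edge dominates itself). -/
def Dominates (e f : Sym2 V) : Prop := ∃ v, v ∈ e ∧ v ∈ f

/-- A set of edges `E'` of a simple graph `G` is a dominating induced matching
if every edge of `G` is dominated by exactly one edge of `E'`. -/
def IsDIM (G : SimpleGraph V) (E' : Set (Sym2 V)) : Prop :=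
  E' ⊆ G.edgeSet ∧ ∀ f ∈ G.edgeSet, ∃! e, e ∈ E' ∧ Dominates e f
/-- A total coloring (`true` = black, `false` = white) of the vertices of `G` is valid
if no two white vertices are adjacent and every black vertex has exactly one
black neighbor. -/
def ValidColoring (G : SimpleGraph V) (C : V → Bool) : Prop :=
  (∀ u v, G.Adj u v → ¬(C u = false ∧ C v = false)) ∧
  (∀ v, C v = true → ∃! u, G.Adj v u ∧ C u = true)


/-!
In a valid coloring every black vertex `x` has a unique black partner, and the black edges are
exactly the pairs `s(x, partner x)`; two of them meeting the same edge must coincide, because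
the endpoints they contain are either equal or adjacent black vertices, hence partners.
Conversely, for a dominating induced matching `E'`, two edges of `E'` touching adjacent vertices
both dominate the edge between them and so are equal; coloring black exactly the vertices covered
by `E'` is then valid and its black edges are `E'`. A valid coloring is recovered from its black
edges, since a vertex is black iff it lies on one of them.
-/

section

variable {G : SimpleGraph V}

namespace SimpleGraph

lemma exists_adj_eq_of_mem_edgeSet {e : Sym2 V} (he : e ∈ G.edgeSet) {x : V} (hx : x ∈ e) :
    ∃ y, G.Adj x y ∧ e = s(x, y) :=
  ⟨Sym2.Mem.other hx, by rwa [← mem_edgeSet, Sym2.other_spec hx], (Sym2.other_spec hx).symm⟩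

lemma eq_or_adj_of_mem_edgeSet {f : Sym2 V} (hf : f ∈ G.edgeSet) {x y : V} (hx : x ∈ f)
    (hy : y ∈ f) : x = y ∨ G.Adj x y := by
  obtain ⟨z, hxz, rfl⟩ := exists_adj_eq_of_mem_edgeSet hf hx
  rcases Sym2.mem_iff.mp hy with rfl | rfl
  · exact .inl rfl
  · exact .inr hxz

end SimpleGraph

open SimpleGraph

def blackEdges (G : SimpleGraph V) (C : V → Bool) : Set (Sym2 V) :=
  {e | e ∈ G.edgeSet ∧ ∀ v ∈ e, C v = true}

lemma mk_mem_blackEdges {C : V → Bool} {x y : V} (hxy : G.Adj x y) (hx : C x = true)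
    (hy : C y = true) : s(x, y) ∈ blackEdges G C := by
  refine ⟨hxy, fun v hv => ?_⟩
  rcases Sym2.mem_iff.mp hv with rfl | rfl
  exacts [hx, hy]

namespace ValidColoring

variable {C : V → Bool} (hC : ValidColoring G C)
include hC

lemma eq_mk_of_mem_blackEdges {e : Sym2 V} (he : e ∈ blackEdges G C) {x y : V} (hx : x ∈ e)
    (hxy : G.Adj x y) (hy : C y = true) : e = s(x, y) := by
  obtain ⟨z, hxz, rfl⟩ := exists_adj_eq_of_mem_edgeSet he.1 hx
  obtain ⟨w, -, hw⟩ := hC.2 x (he.2 x (Sym2.mem_mk_left x z))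
  rw [hw z ⟨hxz, he.2 z (Sym2.mem_mk_right x z)⟩, hw y ⟨hxy, hy⟩]

lemma eq_of_mem_blackEdges {e e' : Sym2 V} (he : e ∈ blackEdges G C) (he' : e' ∈ blackEdges G C)
    {x y : V} (hx : x ∈ e) (hy : y ∈ e') (hxy : x = y ∨ G.Adj x y) : e = e' := by
  rcases hxy with rfl | hxy
  · obtain ⟨z, hxz, rfl⟩ := exists_adj_eq_of_mem_edgeSet he.1 hx
    exact (hC.eq_mk_of_mem_blackEdges he' hy hxz (he.2 z (Sym2.mem_mk_right x z))).symm
  · rw [hC.eq_mk_of_mem_blackEdges he hx hxy (he'.2 y hy),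
      hC.eq_mk_of_mem_blackEdges he' hy hxy.symm (he.2 x hx), Sym2.eq_swap]

lemma exists_mem_blackEdges_of_adj {u v : V} (huv : G.Adj u v) :
    ∃ e ∈ blackEdges G C, Dominates e s(u, v) := by
  obtain ⟨x, hx, hxC⟩ : ∃ x ∈ s(u, v), C x = true := by
    by_cases hu : C u = true
    · exact ⟨u, Sym2.mem_mk_left u v, hu⟩
    · exact ⟨v, Sym2.mem_mk_right u v, by simpa [hu] using hC.1 u v huv⟩
  obtain ⟨y, ⟨hxy, hy⟩, -⟩ := hC.2 x hxC
  exact ⟨s(x, y), mk_mem_blackEdges hxy hxC hy, x, Sym2.mem_mk_left x y, hx⟩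

lemma isDIM_blackEdges : IsDIM G (blackEdges G C) := by
  refine ⟨fun e he => he.1, fun f hf => ?_⟩
  induction f using Sym2.ind with
  | _ u v =>
    obtain ⟨e, he, hdom⟩ := hC.exists_mem_blackEdges_of_adj hf
    refine ⟨e, ⟨he, hdom⟩, fun e' ⟨he', x', hx'e', hx'f⟩ => ?_⟩
    obtain ⟨x, hxe, hxf⟩ := hdom
    exact hC.eq_of_mem_blackEdges he' he hx'e' hxe (eq_or_adj_of_mem_edgeSet hf hx'f hxf)

lemma eq_true_iff (v : V) : C v = true ↔ ∃ e ∈ blackEdges G C, v ∈ e := by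
  refine ⟨fun hv => ?_, fun ⟨e, he, hve⟩ => he.2 v hve⟩
  obtain ⟨w, ⟨hvw, hw⟩, -⟩ := hC.2 v hv
  exact ⟨s(v, w), mk_mem_blackEdges hvw hv hw, Sym2.mem_mk_left v w⟩

end ValidColoring

lemma ValidColoring.eq_of_blackEdges_eq {C C' : V → Bool} (hC : ValidColoring G C)
    (hC' : ValidColoring G C') (h : blackEdges G C = blackEdges G C') : C = C' :=
  funext fun v => Bool.eq_iff_iff.mpr <| by rw [hC.eq_true_iff, hC'.eq_true_iff, h]

open Classical in
noncomputable def coveredColoring (E' : Set (Sym2 V)) (v : V) : Bool :=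
  decide (∃ e ∈ E', v ∈ e)

lemma coveredColoring_eq_true_iff {E' : Set (Sym2 V)} {v : V} :
    coveredColoring E' v = true ↔ ∃ e ∈ E', v ∈ e := by
  simp [coveredColoring]

namespace IsDIM

variable {E' : Set (Sym2 V)} (hE' : IsDIM G E')
include hE'

lemma eq_of_adj {e e' : Sym2 V} (he : e ∈ E') (he' : e' ∈ E') {u v : V} (hu : u ∈ e)
    (hv : v ∈ e') (huv : G.Adj u v) : e = e' := by
  obtain ⟨d, -, hd⟩ := hE'.2 s(u, v) huv
  rw [hd e ⟨he, u, hu, Sym2.mem_mk_left u v⟩, hd e' ⟨he', v, hv, Sym2.mem_mk_right u v⟩]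

lemma validColoring_coveredColoring : ValidColoring G (coveredColoring E') := by
  refine ⟨fun u v huv ⟨hu, hv⟩ => ?_, fun v hv => ?_⟩
  · obtain ⟨d, ⟨hd, x, hxd, hxf⟩, -⟩ := hE'.2 s(u, v) huv
    have hx : coveredColoring E' x = true := coveredColoring_eq_true_iff.mpr ⟨d, hd, hxd⟩
    rcases Sym2.mem_iff.mp hxf with rfl | rfl <;> simp_all
  · obtain ⟨e, he, hve⟩ := coveredColoring_eq_true_iff.mp hv
    obtain ⟨w, hvw, rfl⟩ := exists_adj_eq_of_mem_edgeSet (hE'.1 he) hve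
    refine ⟨w, ⟨hvw, coveredColoring_eq_true_iff.mpr ⟨_, he, Sym2.mem_mk_right v w⟩⟩, ?_⟩
    rintro u ⟨hvu, hu⟩
    obtain ⟨e', he', hue'⟩ := coveredColoring_eq_true_iff.mp hu
    rw [← hE'.eq_of_adj he he' hve hue' hvu] at hue'
    exact (Sym2.mem_iff.mp hue').resolve_left hvu.ne'

lemma blackEdges_coveredColoring : blackEdges G (coveredColoring E') = E' := by
  ext f
  refine ⟨fun ⟨hf, hblack⟩ => ?_, fun hf => ⟨hE'.1 hf, fun x hx =>
    coveredColoring_eq_true_iff.mpr ⟨f, hf, hx⟩⟩⟩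
  induction f using Sym2.ind with
  | _ u v =>
    obtain ⟨e, he, hue⟩ := coveredColoring_eq_true_iff.mp (hblack u (Sym2.mem_mk_left u v))
    obtain ⟨e', he', hve'⟩ := coveredColoring_eq_true_iff.mp (hblack v (Sym2.mem_mk_right u v))
    rw [← hE'.eq_of_adj he he' hue hve' hf] at hve'
    rwa [← (Sym2.mem_and_mem_iff (G.ne_of_adj hf)).mp ⟨hue, hve'⟩]

end IsDIM

end

theorem stmt_0_general (G : SimpleGraph V) :
    Set.BijOn (fun C : V → Bool => {e | e ∈ G.edgeSet ∧ ∀ v ∈ e, C v = true})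
      {C | ValidColoring G C} {E' | IsDIM G E'} :=
  ⟨fun _ hC => ValidColoring.isDIM_blackEdges hC,
    fun _ hC _ hC' h => hC.eq_of_blackEdges_eq hC' h,
    fun _ hE' => ⟨_, hE'.validColoring_coveredColoring, hE'.blackEdges_coveredColoring⟩⟩

/-- The map sending a total valid coloring to the set of edges both of whose
endpoints are black is a bijection from total valid colorings to dominating
induced matchings. -/
theorem stmt_0 [Fintype V] (G : SimpleGraph V) :
    Set.BijOn (fun C : V → Bool => {e | e ∈ G.edgeSet ∧ ∀ v ∈ e, C v = true})
      {C | ValidColoring G C} {E' | IsDIM G E'} :=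
  stmt_0_general G
end

section
/- Let G be a finite simple graph with a total valid coloring, and let a, b, c, d be distinct vertices forming an induced diamond: ab, ac, ad, bc, bd are edges of G and cd is not an edge. Then a and b are colored black and c and d are colored white. -/
/-!
If `a` were white, then `b`, `c`, `d` would all be black and `b` would have the two black
neighbours `c ≠ d`; symmetrically for `b`. Once `a` and `b` are black, `b` is the unique black
neighbour of `a`, so the other neighbours `c` and `d` of `a` are white.
-/

variable {V : Type*}

namespace ValidColoring

variable {G : SimpleGraph V} {C : V → Bool} {u v x y : V}

theorem eq_true_of_adj_of_eq_false (hC : ValidColoring G C) (huv : G.Adj u v)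
    (hu : C u = false) : C v = true := by
  by_contra hv
  exact hC.1 u v huv ⟨hu, Bool.of_not_eq_true hv⟩

theorem eq_of_adj_of_eq_true (hC : ValidColoring G C) (hv : C v = true)
    (hx : G.Adj v x) (hCx : C x = true) (hy : G.Adj v y) (hCy : C y = true) : x = y :=
  (hC.2 v hv).unique ⟨hx, hCx⟩ ⟨hy, hCy⟩

theorem eq_false_of_adj_of_ne (hC : ValidColoring G C) (hv : C v = true)
    (hx : G.Adj v x) (hCx : C x = true) (hy : G.Adj v y) (hxy : y ≠ x) : C y = false := by
  by_contra hCy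
  exact hxy (hC.eq_of_adj_of_eq_true hv hy (Bool.of_not_eq_false hCy) hx hCx)

theorem eq_true_of_adj_of_common_adj (hC : ValidColoring G C) (huv : G.Adj u v)
    (hux : G.Adj u x) (huy : G.Adj u y) (hvx : G.Adj v x) (hvy : G.Adj v y) (hxy : x ≠ y) :
    C u = true := by
  by_contra hu
  have hu : C u = false := Bool.of_not_eq_true hu
  exact hxy (hC.eq_of_adj_of_eq_true (hC.eq_true_of_adj_of_eq_false huv hu)
    hvx (hC.eq_true_of_adj_of_eq_false hux hu) hvy (hC.eq_true_of_adj_of_eq_false huy hu))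

end ValidColoring

theorem stmt_2_general (G : SimpleGraph V) (C : V → Bool)
    (hC : ValidColoring G C) (a b c d : V)
    (hdist : a ≠ b ∧ a ≠ c ∧ a ≠ d ∧ b ≠ c ∧ b ≠ d ∧ c ≠ d)
    (hab : G.Adj a b) (hac : G.Adj a c) (had : G.Adj a d)
    (hbc : G.Adj b c) (hbd : G.Adj b d) :
    C a = true ∧ C b = true ∧ C c = false ∧ C d = false := by
  obtain ⟨-, -, -, hbc', hbd', hcd'⟩ := hdist
  have ha := hC.eq_true_of_adj_of_common_adj hab hac had hbc hbd hcd'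
  have hb := hC.eq_true_of_adj_of_common_adj hab.symm hbc hbd hac had hcd'
  exact ⟨ha, hb, hC.eq_false_of_adj_of_ne ha hab hb hac hbc'.symm,
    hC.eq_false_of_adj_of_ne ha hab hb had hbd'.symm⟩

/-- In an induced diamond, any total valid coloring colors the two degree-3
vertices black and the other two vertices white. -/
theorem stmt_2 [Fintype V] (G : SimpleGraph V) (C : V → Bool)
    (hC : ValidColoring G C) (a b c d : V)
    (hdist : a ≠ b ∧ a ≠ c ∧ a ≠ d ∧ b ≠ c ∧ b ≠ d ∧ c ≠ d)
    (hab : G.Adj a b) (hac : G.Adj a c) (had : G.Adj a d)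
    (hbc : G.Adj b c) (hbd : G.Adj b d) (hcd : ¬ G.Adj c d) :
    C a = true ∧ C b = true ∧ C c = false ∧ C d = false :=
  stmt_2_general G C hC a b c d hdist hab hac had hbc hbd
end

section
/- Let G be a finite simple graph with a total valid coloring, and let v1, v2, v3, v4 be distinct vertices forming an induced 4-cycle: v1v2, v2v3, v3v4, v4v1 are edges of G, while v1v3 and v2v4 are not edges. Then any two adjacent vertices of the cycle receive different colors; that is, v1 and v3 receive one color and v2 and v4 receive the other. -/
/-!
If two adjacent vertices `a, b` of a 4-cycle `a b c d` were both black, each would be the other's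
unique black neighbour, forcing the remaining vertices `c` and `d` to be white; but `c` and `d` are
adjacent. Two adjacent white vertices are excluded outright, so consecutive vertices of the cycle
get different colours, and with only two colours opposite vertices then agree.
-/

variable {V : Type*}

namespace ValidColoring

variable {G : SimpleGraph V} {C : V → Bool}

theorem eq_of_black_neighbors (hC : ValidColoring G C) {v u w : V} (hv : C v = true)
    (hvu : G.Adj v u) (hu : C u = true) (hvw : G.Adj v w) (hw : C w = true) : u = w :=
  (hC.2 v hv).unique ⟨hvu, hu⟩ ⟨hvw, hw⟩

theorem white_of_adj_of_ne_black_neighbor (hC : ValidColoring G C) {v u w : V}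
    (hv : C v = true) (hvu : G.Adj v u) (hu : C u = true) (hvw : G.Adj v w) (hwu : w ≠ u) :
    C w = false := by
  rw [Bool.eq_false_iff]
  exact fun hw => hwu (hC.eq_of_black_neighbors hv hvw hw hvu hu)

theorem color_ne_of_square (hC : ValidColoring G C) {a b c d : V}
    (hab : G.Adj a b) (hbc : G.Adj b c) (hcd : G.Adj c d) (hda : G.Adj d a)
    (hca : c ≠ a) (hdb : d ≠ b) : C a ≠ C b := by
  intro hcol
  cases ha : C a
  · exact hC.1 a b hab ⟨ha, hcol ▸ ha⟩
  · have hb : C b = true := hcol ▸ ha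
    have hd : C d = false := hC.white_of_adj_of_ne_black_neighbor ha hab hb hda.symm hdb
    have hc : C c = false := hC.white_of_adj_of_ne_black_neighbor hb hab.symm ha hbc hca
    exact hC.1 c d hcd ⟨hc, hd⟩

end ValidColoring

theorem Bool.eq_of_ne_of_ne {a b c : Bool} (hab : a ≠ b) (hbc : b ≠ c) : a = c :=
  (Bool.eq_not_of_ne hab).trans (Bool.eq_not_of_ne hbc.symm).symm

theorem stmt_8_general (G : SimpleGraph V) (C : V → Bool)
    (hC : ValidColoring G C) (v₁ v₂ v₃ v₄ : V)
    (hdist : v₁ ≠ v₂ ∧ v₁ ≠ v₃ ∧ v₁ ≠ v₄ ∧ v₂ ≠ v₃ ∧ v₂ ≠ v₄ ∧ v₃ ≠ v₄)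
    (h12 : G.Adj v₁ v₂) (h23 : G.Adj v₂ v₃) (h34 : G.Adj v₃ v₄) (h41 : G.Adj v₄ v₁) :
    C v₁ = C v₃ ∧ C v₂ = C v₄ ∧ C v₁ ≠ C v₂ := by
  obtain ⟨-, h13, -, -, h24, -⟩ := hdist
  have ne12 := hC.color_ne_of_square h12 h23 h34 h41 h13.symm h24.symm
  have ne23 := hC.color_ne_of_square h23 h34 h41 h12 h24.symm h13
  have ne34 := hC.color_ne_of_square h34 h41 h12 h23 h13 h24
  exact ⟨Bool.eq_of_ne_of_ne ne12 ne23, Bool.eq_of_ne_of_ne ne23 ne34, ne12⟩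

/-- In an induced 4-cycle, any total valid coloring gives adjacent vertices of
the cycle different colors: opposite vertices agree and adjacent ones differ. -/
theorem stmt_8 [Fintype V] (G : SimpleGraph V) (C : V → Bool)
    (hC : ValidColoring G C) (v₁ v₂ v₃ v₄ : V)
    (hdist : v₁ ≠ v₂ ∧ v₁ ≠ v₃ ∧ v₁ ≠ v₄ ∧ v₂ ≠ v₃ ∧ v₂ ≠ v₄ ∧ v₃ ≠ v₄)
    (h12 : G.Adj v₁ v₂) (h23 : G.Adj v₂ v₃) (h34 : G.Adj v₃ v₄) (h41 : G.Adj v₄ v₁)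
    (h13 : ¬ G.Adj v₁ v₃) (h24 : ¬ G.Adj v₂ v₄) :
    C v₁ = C v₃ ∧ C v₂ = C v₄ ∧ C v₁ ≠ C v₂ :=
  stmt_8_general G C hC v₁ v₂ v₃ v₄ hdist h12 h23 h34 h41
end

section
/- Every dominating induced matching of a finite simple graph G is an induced matching of maximum cardinality: if D is a dominating induced matching of G and M is any induced matching of G, then |M| ≤ |D|. Consequently, any two dominating induced matchings of G have the same number of edges. -/
variable {V : Type*}

/-- A set `M` of edges of `G` is an induced matching if no two distinct edges of
`M` share a vertex and no edge of `G` joins endpoints of two distinct edges of `M`. -/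
def IsInducedMatching (G : SimpleGraph V) (M : Set (Sym2 V)) : Prop :=
  M ⊆ G.edgeSet ∧ ∀ e ∈ M, ∀ f ∈ M, e ≠ f →
    ∀ u v : V, u ∈ e → v ∈ f → u ≠ v ∧ ¬ G.Adj u v

namespace IsInducedMatching

variable {G : SimpleGraph V}

/-- An edge meeting two distinct edges of an induced matching would itself join them. -/
lemma eq_of_dominates {M : Set (Sym2 V)} (hM : IsInducedMatching G M) {e f₁ f₂ : Sym2 V}
    (he : e ∈ G.edgeSet) (hf₁ : f₁ ∈ M) (hf₂ : f₂ ∈ M) (h₁ : Dominates e f₁)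
    (h₂ : Dominates e f₂) : f₁ = f₂ := by
  by_contra hne
  obtain ⟨u, hue, huf⟩ := h₁
  obtain ⟨v, hve, hvf⟩ := h₂
  obtain ⟨huv, hnadj⟩ := hM.2 f₁ hf₁ f₂ hf₂ hne u v huf hvf
  rw [(Sym2.mem_and_mem_iff huv).mp ⟨hue, hve⟩] at he
  exact hnadj he

lemma card_le_of_dominated {M D : Finset (Sym2 V)} (hM : IsInducedMatching G ↑M)
    (hD : ↑D ⊆ G.edgeSet) (hdom : ∀ f ∈ M, ∃ e ∈ D, Dominates e f) : M.card ≤ D.card :=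
  Finset.card_le_card_of_forall_subsingleton (fun f e => Dominates e f) hdom
    fun _ he _ hf₁ _ hf₂ => hM.eq_of_dominates (hD he) hf₁.1 hf₂.1 hf₁.2 hf₂.2

end IsInducedMatching

namespace IsDIM

variable {G : SimpleGraph V}

lemma eq_of_dominates {D : Set (Sym2 V)} (hD : IsDIM G D) {g e f : Sym2 V}
    (hg : g ∈ G.edgeSet) (he : e ∈ D) (hf : f ∈ D) (heg : Dominates e g)
    (hfg : Dominates f g) : e = f :=
  (hD.2 g hg).unique ⟨he, heg⟩ ⟨hf, hfg⟩

lemma isInducedMatching {D : Set (Sym2 V)} (hD : IsDIM G D) : IsInducedMatching G D := by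
  refine ⟨hD.1, fun e he f hf hne u v hu hv => ⟨?_, fun hadj => ?_⟩⟩
  · rintro rfl
    exact hne (hD.eq_of_dominates (hD.1 hf) he hf ⟨u, hu, hv⟩ ⟨u, hv, hv⟩)
  · exact hne (hD.eq_of_dominates hadj he hf ⟨u, hu, Sym2.mem_mk_left u v⟩
      ⟨v, hv, Sym2.mem_mk_right u v⟩)

lemma card_le {D M : Finset (Sym2 V)} (hD : IsDIM G ↑D) (hM : IsInducedMatching G ↑M) :
    M.card ≤ D.card :=
  hM.card_le_of_dominated hD.1 fun f hf =>
    let ⟨e, ⟨he, hef⟩, _⟩ := hD.2 f (hM.1 hf)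
    ⟨e, he, hef⟩

end IsDIM

theorem stmt_9_general (G : SimpleGraph V) (D M : Finset (Sym2 V))
    (hD : IsDIM G ↑D) (hM : IsInducedMatching G ↑M) :
    M.card ≤ D.card ∧
      ∀ D' : Finset (Sym2 V), IsDIM G ↑D' → D'.card = D.card :=
  ⟨hD.card_le hM, fun _ hD' => le_antisymm (hD.card_le hD'.isInducedMatching)
    (hD'.card_le hD.isInducedMatching)⟩

/-- Every dominating induced matching is an induced matching of maximum
cardinality; consequently all dominating induced matchings have the same size. -/
theorem stmt_9 [Fintype V] (G : SimpleGraph V) (D M : Finset (Sym2 V))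
    (hD : IsDIM G ↑D) (hM : IsInducedMatching G ↑M) :
    M.card ≤ D.card ∧
      ∀ D' : Finset (Sym2 V), IsDIM G ↑D' → D'.card = D.card :=
  stmt_9_general G D M hD hM
end

section
/- Let G be a finite simple graph with an edge-weight function w assigning a real number to each edge, let M be a real number, and define a new weight function w' by w'(e) = w(e) + M for every edge e. Then a dominating induced matching D of G minimizes the total weight (sum of edge weights over edges of D) with respect to w among all dominating induced matchings of G if and only if D minimizes the total weight with respect to w' among all dominating induced matchings of G. -/
/-! Any two dominating induced matchings have the same number of edges: every edge of one is
dominated by exactly one edge of the other, and conversely. So shifting all weights by `M` adds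
the same amount `|D| * M` to the total weight of every dominating induced matching. -/

variable {V : Type*}

theorem Dominates.symm {e f : Sym2 V} (h : Dominates e f) : Dominates f e :=
  let ⟨v, he, hf⟩ := h
  ⟨v, hf, he⟩

theorem IsDIM.card_le_s10 {G : SimpleGraph V} {D D' : Finset (Sym2 V)}
    (hD : IsDIM G ↑D) (hD' : IsDIM G ↑D') : D.card ≤ D'.card := by
  refine Finset.card_le_card_of_forall_subsingleton (fun e e' => Dominates e' e) ?_ ?_
  · intro e he
    exact (hD'.2 e (hD.1 he)).exists
  · intro e' he' e₁ ⟨he₁, h₁⟩ e₂ ⟨he₂, h₂⟩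
    exact (hD.2 e' (hD'.1 he')).unique ⟨he₁, h₁.symm⟩ ⟨he₂, h₂.symm⟩

theorem IsDIM.card_eq {G : SimpleGraph V} {D D' : Finset (Sym2 V)}
    (hD : IsDIM G ↑D) (hD' : IsDIM G ↑D') : D.card = D'.card :=
  le_antisymm (hD.card_le_s10 hD') (hD'.card_le_s10 hD)

theorem Finset.sum_add_const_le_sum_add_const_iff {α β : Type*} [AddCommMonoid β]
    [PartialOrder β] [IsOrderedCancelAddMonoid β] {s t : Finset α}
    (h : s.card = t.card) (w : α → β) (M : β) :
    ∑ e ∈ s, (w e + M) ≤ ∑ e ∈ t, (w e + M) ↔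
      ∑ e ∈ s, w e ≤ ∑ e ∈ t, w e := by
  simp only [Finset.sum_add_distrib, Finset.sum_const, h, add_le_add_iff_right]

theorem stmt_10_general (G : SimpleGraph V) (w : Sym2 V → ℝ) (M : ℝ)
    (D : Finset (Sym2 V)) (hD : IsDIM G ↑D) :
    (∀ D' : Finset (Sym2 V), IsDIM G ↑D' →
        ∑ e ∈ D, w e ≤ ∑ e ∈ D', w e) ↔
      (∀ D' : Finset (Sym2 V), IsDIM G ↑D' →
        ∑ e ∈ D, (w e + M) ≤ ∑ e ∈ D', (w e + M)) :=
  forall₂_congr fun _ hD' =>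
    (Finset.sum_add_const_le_sum_add_const_iff (hD.card_eq hD') w M).symm

/-- Shifting all edge weights by a constant `M` does not change which dominating
induced matchings have minimum total weight. -/
theorem stmt_10 [Fintype V] (G : SimpleGraph V) (w : Sym2 V → ℝ) (M : ℝ)
    (D : Finset (Sym2 V)) (hD : IsDIM G ↑D) :
    (∀ D' : Finset (Sym2 V), IsDIM G ↑D' →
        ∑ e ∈ D, w e ≤ ∑ e ∈ D', w e) ↔
      (∀ D' : Finset (Sym2 V), IsDIM G ↑D' →
        ∑ e ∈ D, (w e + M) ≤ ∑ e ∈ D', (w e + M)) :=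
  stmt_10_general G w M D hD
end

section
/- Any two total valid colorings of a finite simple graph G color the same number of vertices black; this number equals twice the common cardinality of the dominating induced matchings of G. -/
variable {V : Type*}

/-! The black vertices of a valid coloring induce a perfect matching on themselves, and its edges
form a DIM: every edge has a black endpoint, whose black edge dominates it, and two black edges
dominating the same edge coincide. By the handshake lemma this DIM has half as many edges as there
are black vertices. Finally, any two DIMs have the same size, because domination restricts to a
bijection between them. -/

theorem Set.ncard_eq_of_existsUnique {α β : Type*} {s : Set α} {t : Set β} (R : α → β → Prop)
    (hs : ∀ a ∈ s, ∃! b, b ∈ t ∧ R a b) (ht : ∀ b ∈ t, ∃! a, a ∈ s ∧ R a b) :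
    s.ncard = t.ncard := by
  refine Set.ncard_congr (fun a ha => (hs a ha).choose) (fun a ha => (hs a ha).choose_spec.1.1)
    (fun a a' ha ha' heq => ?_) (fun b hb => ?_)
  · have hR := (hs a ha).choose_spec.1
    have hR' := (hs a' ha').choose_spec.1
    rw [← heq] at hR'
    exact (ht _ hR.1).unique ⟨ha, hR.2⟩ ⟨ha', hR'.2⟩
  · obtain ⟨a, ⟨ha, hab⟩, -⟩ := ht b hb
    exact ⟨a, ha, (hs a ha).unique (hs a ha).choose_spec.1 ⟨hb, hab⟩⟩

theorem dominates_comm {e f : Sym2 V} : Dominates e f ↔ Dominates f e :=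
  exists_congr fun _ => and_comm

theorem IsDIM.ncard_eq {G : SimpleGraph V} {E₁ E₂ : Set (Sym2 V)} (h₁ : IsDIM G E₁)
    (h₂ : IsDIM G E₂) : E₁.ncard = E₂.ncard :=
  Set.ncard_eq_of_existsUnique (fun e f => Dominates f e) (fun e he => h₂.2 e (h₁.1 he))
    fun f hf => by simpa only [dominates_comm] using h₁.2 f (h₂.1 hf)

def blackGraph (G : SimpleGraph V) (C : V → Bool) : SimpleGraph V where
  Adj u v := G.Adj u v ∧ C u = true ∧ C v = true
  symm := ⟨fun _ _ h => ⟨h.1.symm, h.2.2, h.2.1⟩⟩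
  loopless := ⟨fun _ h => G.irrefl h.1⟩

theorem blackGraph_le (G : SimpleGraph V) (C : V → Bool) : blackGraph G C ≤ G :=
  fun _ _ h => h.1

theorem eq_true_of_mem_edgeSet_blackGraph {G : SimpleGraph V} {C : V → Bool} {e : Sym2 V}
    {v : V} (he : e ∈ (blackGraph G C).edgeSet) (hv : v ∈ e) : C v = true := by
  obtain ⟨w, rfl⟩ := Sym2.mem_iff_exists.1 hv
  exact ((SimpleGraph.mem_edgeSet _).1 he).2.1

namespace ValidColoring

variable {G : SimpleGraph V} {C : V → Bool}

theorem eq_true_or_eq_true_of_adj (h : ValidColoring G C) {u v : V} (huv : G.Adj u v) :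
    C u = true ∨ C v = true := by
  by_contra! hc
  simp only [ne_eq, Bool.not_eq_true] at hc
  exact h.1 u v huv hc

theorem existsUnique_blackGraph_adj (h : ValidColoring G C) {v : V} (hv : C v = true) :
    ∃! w, (blackGraph G C).Adj v w := by
  obtain ⟨w, ⟨hvw, hw⟩, huniq⟩ := h.2 v hv
  exact ⟨w, ⟨hvw, hv, hw⟩, fun u hu => huniq u ⟨hu.1, hu.2.2⟩⟩

theorem blackGraph_edge_eq_of_mem (h : ValidColoring G C) {e e' : Sym2 V} {v : V}
    (he : e ∈ (blackGraph G C).edgeSet) (he' : e' ∈ (blackGraph G C).edgeSet)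
    (hve : v ∈ e) (hve' : v ∈ e') : e = e' := by
  obtain ⟨a, rfl⟩ := Sym2.mem_iff_exists.1 hve
  obtain ⟨b, rfl⟩ := Sym2.mem_iff_exists.1 hve'
  rw [SimpleGraph.mem_edgeSet] at he he'
  rw [(h.existsUnique_blackGraph_adj he.2.1).unique he he']

theorem exists_blackGraph_edge_dominates (h : ValidColoring G C) {f : Sym2 V}
    (hf : f ∈ G.edgeSet) : ∃ e ∈ (blackGraph G C).edgeSet, Dominates e f := by
  induction f using Sym2.ind with
  | _ x y =>
  obtain ⟨u, hu, huf⟩ : ∃ u, C u = true ∧ u ∈ s(x, y) := by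
    rcases h.eq_true_or_eq_true_of_adj hf with hx | hy
    · exact ⟨x, hx, Sym2.mem_mk_left x y⟩
    · exact ⟨y, hy, Sym2.mem_mk_right x y⟩
  obtain ⟨w, huw, -⟩ := h.existsUnique_blackGraph_adj hu
  exact ⟨s(u, w), huw, u, Sym2.mem_mk_left u w, huf⟩

theorem blackGraph_edge_eq_of_dominates (h : ValidColoring G C) {e e' f : Sym2 V}
    (hf : f ∈ G.edgeSet) (he : e ∈ (blackGraph G C).edgeSet)
    (he' : e' ∈ (blackGraph G C).edgeSet) (hef : Dominates e f) (he'f : Dominates e' f) :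
    e = e' := by
  obtain ⟨x, hxe, hxf⟩ := hef
  obtain ⟨y, hye, hyf⟩ := he'f
  by_cases hxy : x = y
  · subst hxy
    exact h.blackGraph_edge_eq_of_mem he he' hxe hye
  -- two distinct black endpoints make `f` itself a black edge
  have hfxy : f = s(x, y) := (Sym2.mem_and_mem_iff hxy).1 ⟨hxf, hyf⟩
  have hfb : f ∈ (blackGraph G C).edgeSet := by
    subst hfxy
    exact ⟨hf, eq_true_of_mem_edgeSet_blackGraph he hxe, eq_true_of_mem_edgeSet_blackGraph he' hye⟩
  exact (h.blackGraph_edge_eq_of_mem he hfb hxe hxf).trans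
    (h.blackGraph_edge_eq_of_mem hfb he' hyf hye)

theorem isDIM_blackGraph_edgeSet (h : ValidColoring G C) :
    IsDIM G (blackGraph G C).edgeSet := by
  refine ⟨SimpleGraph.edgeSet_mono (blackGraph_le G C), fun f hf => ?_⟩
  obtain ⟨e, he, hef⟩ := h.exists_blackGraph_edge_dominates hf
  exact ⟨e, ⟨he, hef⟩, fun e' ⟨he', he'f⟩ => h.blackGraph_edge_eq_of_dominates hf he' he he'f hef⟩

theorem degree_blackGraph [Fintype V] [DecidableRel (blackGraph G C).Adj] (h : ValidColoring G C)
    (v : V) : (blackGraph G C).degree v = if C v = true then 1 else 0 := by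
  split_ifs with hv
  · exact SimpleGraph.degree_eq_one_iff_existsUnique_adj.2 (h.existsUnique_blackGraph_adj hv)
  · exact (SimpleGraph.degree_eq_zero _ _).2 fun w hvw => hv hvw.2.1

theorem card_black_eq_two_mul_ncard [Fintype V] (h : ValidColoring G C) :
    (Finset.univ.filter fun v => C v = true).card = 2 * (blackGraph G C).edgeSet.ncard := by
  classical
  rw [Finset.card_filter, ← SimpleGraph.coe_edgeFinset, Set.ncard_coe_finset,
    ← SimpleGraph.sum_degrees_eq_twice_card_edges]
  exact Finset.sum_congr rfl fun v _ => (h.degree_blackGraph v).symm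

theorem card_black_eq_two_mul_card_of_isDIM [Fintype V] (h : ValidColoring G C)
    {D : Finset (Sym2 V)} (hD : IsDIM G ↑D) :
    (Finset.univ.filter fun v => C v = true).card = 2 * D.card := by
  rw [h.card_black_eq_two_mul_ncard, h.isDIM_blackGraph_edgeSet.ncard_eq hD, Set.ncard_coe_finset]

end ValidColoring

/-- Any two total valid colorings of `G` have the same number of black vertices,
and this number is twice the cardinality of any dominating induced matching. -/
theorem stmt_14 [Fintype V] (G : SimpleGraph V) (C₁ C₂ : V → Bool)
    (h₁ : ValidColoring G C₁) (h₂ : ValidColoring G C₂)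
    (D : Finset (Sym2 V)) (hD : IsDIM G ↑D) :
    (Finset.univ.filter fun v => C₁ v = true).card =
      (Finset.univ.filter fun v => C₂ v = true).card ∧
    (Finset.univ.filter fun v => C₁ v = true).card = 2 * D.card :=
  ⟨(h₁.card_black_eq_two_mul_card_of_isDIM hD).trans
      (h₂.card_black_eq_two_mul_card_of_isDIM hD).symm,
    h₁.card_black_eq_two_mul_card_of_isDIM hD⟩
end
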